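/- Sunrise-type rearrangement inequality: let 0 < a < s < n and let f be a measurable function on ℝ^n with ∫_0^∞ f^*(r) r^{s/n - 1} dr < ∞. Then ∫_0^∞ (f^*(r) r^{(s-a)/n})^*(y) y^{a/n - 1} dy ≤ (C(n)/a) ∫_0^∞ f^*(r) r^{s/n - 1} dr, where (f^*(r) r^{(s-a)/n})^* denotes the nonincreasing rearrangement (over (0,∞)) of the function r ↦ f^*(r) r^{(s-a)/n}, and C(n) depends only on n. -/

import Mathlib

/-!
Write `α = a/n`, `θ = (s-a)/n`, `F = f^*`, `φ(r) = F(r) r^θ` and `Λ(t) = |{r > 0 : φ(r) > t}|`.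
Since `φ^*(y) > t` forces `y ≤ Λ(t)`, the layer-cake formula for the measure `y^(α-1) dy` gives
`∫ φ^*(y) y^(α-1) dy ≤ α⁻¹ ∫ Λ(t)^α dt`. As `F` is nonincreasing, `φ ≤ F(2^k) 2^((k+1)θ)` on the
dyadic block `(2^k, 2^(k+1)]`, so `Λ(t) ≤ ∑ₖ 2^k [t < F(2^k) 2^((k+1)θ)]`; subadditivity of
`x ↦ x^α` and integration in `t` give `∫ Λ^α ≤ 2 ∑ₖ F(2^k) 2^(k(α+θ))`, and comparing each term
with the integral of `F(r) r^(α+θ-1)` over `(2^(k-1), 2^k]` bounds the sum by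
`2 ∫ F(r) r^(α+θ-1) dr`. Altogether `C(n) = 4n` works.
-/

open MeasureTheory Set
open scoped ENNReal

/-- Nonincreasing rearrangement of `f : ℝ^n → ℝ`. -/
noncomputable def rearr {n : ℕ} (f : EuclideanSpace ℝ (Fin n) → ℝ) (t : ℝ) : ℝ :=
  sInf {r : ℝ | 0 ≤ r ∧ volume {y | r < |f y|} < ENNReal.ofReal t}

/-- Nonincreasing rearrangement of a function on `(0,∞)` (with Lebesgue measure). -/
noncomputable def rearrLine (φ : ℝ → ℝ) (t : ℝ) : ℝ :=
  sInf {r : ℝ | 0 ≤ r ∧ volume {y ∈ Ioi (0 : ℝ) | r < |φ y|} < ENNReal.ofReal t}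

open Filter Function
open scoped Topology

section Rearrangement

variable {X : Type*} [MeasurableSpace X] {μ : Measure X} {g : X → ℝ}

variable (μ g) in
noncomputable def rearrangement (t : ℝ) : ℝ :=
  sInf {r : ℝ | 0 ≤ r ∧ μ {y | r < |g y|} < ENNReal.ofReal t}

lemma rearr_eq_rearrangement {n : ℕ} (f : EuclideanSpace ℝ (Fin n) → ℝ) :
    rearr f = rearrangement volume f := rfl

lemma rearrLine_eq_rearrangement (φ : ℝ → ℝ) :
    rearrLine φ = rearrangement (volume.restrict (Ioi 0)) φ := by
  ext t
  simp only [rearrLine, rearrangement, Measure.restrict_apply' measurableSet_Ioi, inter_comm]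
  rfl

lemma rearrangement_nonneg (t : ℝ) : 0 ≤ rearrangement μ g t :=
  Real.sInf_nonneg fun _ hr => hr.1

lemma ofReal_le_measure_of_lt_rearrangement {t y : ℝ} (ht : 0 ≤ t)
    (hty : t < rearrangement μ g y) : ENNReal.ofReal y ≤ μ {x | t < |g x|} := by
  by_contra! h
  exact hty.not_ge (csInf_le ⟨0, fun _ hr => hr.1⟩ ⟨ht, h⟩)

lemma tendsto_measure_lt_abs_atTop (hg : AEMeasurable g μ) {r₀ : ℝ}
    (hr₀ : μ {y | r₀ < |g y|} ≠ ∞) :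
    Tendsto (fun r => μ {y | r < |g y|}) atTop (𝓝 0) := by
  have hempty : ⋂ r : ℝ, {y | r < |g y|} = ∅ :=
    eq_empty_of_forall_notMem fun y hy => by simpa using mem_iInter.1 hy |g y|
  simpa [Function.comp_def, hempty] using
    tendsto_measure_iInter_atTop (fun r => nullMeasurableSet_lt aemeasurable_const hg.abs)
      (fun r r' h y (hy : r' < |g y|) => (h.trans_lt hy : r < |g y|)) ⟨r₀, hr₀⟩

lemma antitoneOn_rearrangement (hg : AEMeasurable g μ) :
    AntitoneOn (rearrangement μ g) (Ioi 0) := by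
  intro t₁ ht₁ t₂ _ h12
  let S : ℝ → Set ℝ := fun t => {r : ℝ | 0 ≤ r ∧ μ {y | r < |g y|} < ENNReal.ofReal t}
  rcases (S t₁).eq_empty_or_nonempty with hemp | hne
  · -- `sInf ∅ = 0`, so `S t₂` must be empty too: otherwise some level set has finite measure,
    -- and the level sets above it shrink to measure `< t₁`.
    have hS₂ : S t₂ = ∅ := by
      refine eq_empty_of_forall_notMem fun r hr => ?_
      have hlim := tendsto_measure_lt_abs_atTop hg (hr.2.trans_le le_top).ne
      obtain ⟨r', hr', hr'0⟩ := ((hlim.eventually (gt_mem_nhds (ENNReal.ofReal_pos.2 ht₁))).and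
        (eventually_ge_atTop 0)).exists
      exact hemp.subset ⟨hr'0, hr'⟩
    change sInf (S t₂) ≤ sInf (S t₁)
    rw [hemp, hS₂]
  · exact csInf_le_csInf ⟨0, fun _ hr => hr.1⟩ hne
      fun r hr => ⟨hr.1, hr.2.trans_le (ENNReal.ofReal_le_ofReal h12)⟩

end Rearrangement

lemma ENNReal.rpow_tsum_le_tsum_rpow {ι : Type*} (g : ι → ℝ≥0∞) {p : ℝ} (hp0 : 0 < p)
    (hp1 : p ≤ 1) : (∑' k, g k) ^ p ≤ ∑' k, g k ^ p := by
  have hfin (s : Finset ι) : (∑ k ∈ s, g k) ^ p ≤ ∑' k, g k ^ p := by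
    refine le_trans ?_ (ENNReal.sum_le_tsum s)
    induction s using Finset.cons_induction with
    | empty => simp [ENNReal.zero_rpow_of_pos hp0]
    | cons a s ha ih =>
      rw [Finset.sum_cons, Finset.sum_cons]
      exact (ENNReal.rpow_add_le_add_rpow _ _ hp0.le hp1).trans (add_le_add_right ih _)
  rw [ENNReal.tsum_eq_iSup_sum, ← ENNReal.le_rpow_inv_iff hp0]
  exact iSup_le fun s => (ENNReal.le_rpow_inv_iff hp0).2 (hfin s)

lemma lintegral_Ioc_zero_rpow_sub_one {α : ℝ} (hα : 0 < α) {L : ℝ} (hL : 0 ≤ L) :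
    ∫⁻ y in Ioc 0 L, ENNReal.ofReal (y ^ (α - 1)) = ENNReal.ofReal (L ^ α / α) := by
  have hint : IntegrableOn (fun y : ℝ => y ^ (α - 1)) (Ioc 0 L) := by
    rw [← intervalIntegrable_iff_integrableOn_Ioc_of_le hL]
    exact intervalIntegral.intervalIntegrable_rpow' (by linarith)
  rw [← ofReal_integral_eq_lintegral_ofReal hint
    (ae_restrict_of_forall_mem measurableSet_Ioc fun y hy => Real.rpow_nonneg hy.1.le _),
    ← intervalIntegral.integral_of_le hL, integral_rpow (Or.inl (by linarith)), sub_add_cancel,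
    Real.zero_rpow hα.ne', sub_zero]

lemma lintegral_mul_rpow_le_of_le_distribution {G : ℝ → ℝ} {Λ : ℝ → ℝ≥0∞} {α : ℝ}
    (hα : 0 < α) (hG0 : ∀ y, 0 ≤ G y) (hG : AEMeasurable G (volume.restrict (Ioi 0)))
    (hGΛ : ∀ y > 0, ∀ t > 0, t < G y → ENNReal.ofReal y ≤ Λ t) :
    ∫⁻ y in Ioi 0, ENNReal.ofReal (G y * y ^ (α - 1)) ≤
      (ENNReal.ofReal α)⁻¹ * ∫⁻ t in Ioi 0, Λ t ^ α := by
  let w : ℝ → ℝ≥0∞ := fun y => ENNReal.ofReal (y ^ (α - 1))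
  let ν := (volume.restrict (Ioi (0 : ℝ))).withDensity w
  have hw : AEMeasurable w (volume.restrict (Ioi 0)) :=
    (measurable_id.pow_const _).ennreal_ofReal.aemeasurable
  have hlayer : ∫⁻ y in Ioi 0, ENNReal.ofReal (G y * y ^ (α - 1)) =
      ∫⁻ t in Ioi 0, ν {y | t < G y} := by
    rw [← lintegral_eq_lintegral_meas_lt ν (ae_of_all _ hG0)
      (hG.mono_ac (withDensity_absolutelyContinuous _ _)),
      lintegral_withDensity_eq_lintegral_mul₀ hw hG.ennreal_ofReal]
    refine lintegral_congr fun y => ?_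
    rw [Pi.mul_apply, ENNReal.ofReal_mul (hG0 y), mul_comm]
  have hlevel (t : ℝ) (ht : 0 < t) : ν {y | t < G y} ≤ (ENNReal.ofReal α)⁻¹ * Λ t ^ α := by
    rcases eq_or_ne (Λ t) ∞ with hΛ | hΛ
    · simp [hΛ, ENNReal.top_rpow_of_pos hα, ENNReal.mul_top]
    calc ν {y | t < G y} ≤ ν (Ioc 0 (Λ t).toReal) := by
          have hpos : ∀ᵐ y ∂ν, y ∈ Ioi 0 :=
            (withDensity_absolutelyContinuous _ _).ae_le (ae_restrict_mem measurableSet_Ioi)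
          refine measure_mono_ae <| hpos.mono fun y hy (hty : t < G y) => ?_
          exact ⟨hy, (ENNReal.ofReal_le_iff_le_toReal hΛ).1 (hGΛ y hy t ht hty)⟩
      _ = ENNReal.ofReal ((Λ t).toReal ^ α / α) := by
          rw [withDensity_apply _ measurableSet_Ioc, Measure.restrict_restrict measurableSet_Ioc,
            inter_eq_left.2 Ioc_subset_Ioi_self,
            lintegral_Ioc_zero_rpow_sub_one hα ENNReal.toReal_nonneg]
      _ = (ENNReal.ofReal α)⁻¹ * Λ t ^ α := by
          rw [div_eq_inv_mul, ENNReal.ofReal_mul (inv_nonneg.2 hα.le),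
            ENNReal.ofReal_inv_of_pos hα,
            ← ENNReal.ofReal_rpow_of_nonneg ENNReal.toReal_nonneg hα.le, ENNReal.ofReal_toReal hΛ]
  rw [hlayer, ← lintegral_const_mul' _ _ (by simp [hα])]
  exact setLIntegral_mono' measurableSet_Ioi hlevel

lemma lintegral_rpow_le_tsum_of_le_tsum_indicator {ι : Type*} [Countable ι] {Λ : ℝ → ℝ≥0∞}
    {b : ι → ℝ} {x : ι → ℝ≥0∞} {α : ℝ} (hα0 : 0 < α) (hα1 : α ≤ 1)
    (hΛ : ∀ t > 0, Λ t ≤ ∑' k, (Iio (b k)).indicator (fun _ => x k) t) :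
    ∫⁻ t in Ioi 0, Λ t ^ α ≤ ∑' k, x k ^ α * ENNReal.ofReal (b k) := by
  have hpow (k : ι) (t : ℝ) : (Iio (b k)).indicator (fun _ => x k) t ^ α =
      (Iio (b k)).indicator (fun _ => x k ^ α) t := by
    by_cases ht : t ∈ Iio (b k) <;> simp [ht, ENNReal.zero_rpow_of_pos hα0]
  calc ∫⁻ t in Ioi 0, Λ t ^ α
      ≤ ∫⁻ t in Ioi 0, ∑' k, (Iio (b k)).indicator (fun _ => x k ^ α) t := by
        refine setLIntegral_mono' measurableSet_Ioi fun t ht => ?_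
        calc Λ t ^ α ≤ (∑' k, (Iio (b k)).indicator (fun _ => x k) t) ^ α :=
              ENNReal.rpow_le_rpow (hΛ t ht) hα0.le
          _ ≤ _ := (ENNReal.rpow_tsum_le_tsum_rpow _ hα0 hα1).trans_eq (by simp only [hpow])
    _ = ∑' k, ∫⁻ t in Ioi 0, (Iio (b k)).indicator (fun _ => x k ^ α) t :=
        lintegral_tsum fun k => (measurable_const.indicator measurableSet_Iio).aemeasurable
    _ ≤ ∑' k, x k ^ α * ENNReal.ofReal (b k) := by
        refine ENNReal.tsum_le_tsum fun k => ?_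
        rw [lintegral_indicator measurableSet_Iio, setLIntegral_const,
          Measure.restrict_apply measurableSet_Iio, Iio_inter_Ioi, Real.volume_Ioo, sub_zero]

section Dyadic

variable {F : ℝ → ℝ}

lemma volume_lt_abs_mul_rpow_le_tsum (hF0 : ∀ y, 0 ≤ F y) (hF : AntitoneOn F (Ioi 0))
    {θ : ℝ} (hθ : 0 ≤ θ) (t : ℝ) :
    volume.restrict (Ioi 0) {y | t < |F y * y ^ θ|} ≤
      ∑' k : ℤ, (Iio (F (2 ^ k) * (2 ^ (k + 1)) ^ θ)).indicator
        (fun _ => ENNReal.ofReal (2 ^ k)) t := by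
  let b : ℤ → ℝ := fun k => F (2 ^ k) * (2 ^ (k + 1)) ^ θ
  let T : ℤ → Set ℝ := fun k => if t < b k then Ioc (2 ^ k) (2 ^ (k + 1)) else ∅
  have hcover : {y | t < |F y * y ^ θ|} ∩ Ioi 0 ⊆ ⋃ k, T k := by
    rintro y ⟨hty : t < |F y * y ^ θ|, hy : 0 < y⟩
    obtain ⟨k, hk⟩ := exists_mem_Ioc_zpow hy one_lt_two
    have h2k : (0 : ℝ) < 2 ^ k := zpow_pos two_pos k
    have hφ : F y * y ^ θ ≤ b k :=
      mul_le_mul (hF h2k hy hk.1.le) (Real.rpow_le_rpow hy.le hk.2 hθ)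
        (Real.rpow_nonneg hy.le _) (hF0 _)
    rw [abs_of_nonneg (mul_nonneg (hF0 y) (Real.rpow_nonneg hy.le _))] at hty
    exact mem_iUnion.2 ⟨k, by simp only [T, if_pos (hty.trans_le hφ), hk]⟩
  have hvol (k : ℤ) :
      volume (T k) = (Iio (b k)).indicator (fun _ => ENNReal.ofReal (2 ^ k)) t := by
    by_cases htk : t < b k
    · simp only [T, if_pos htk, indicator_of_mem (mem_Iio.2 htk), Real.volume_Ioc]
      rw [zpow_add_one₀ two_ne_zero]
      ring_nf
    · simp [T, htk]
  calc volume.restrict (Ioi 0) {y | t < |F y * y ^ θ|}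
      = volume ({y | t < |F y * y ^ θ|} ∩ Ioi 0) := Measure.restrict_apply' measurableSet_Ioi
    _ ≤ ∑' k, volume (T k) := (measure_mono hcover).trans (measure_iUnion_le T)
    _ = _ := tsum_congr hvol

lemma ofReal_mul_rpow_le_two_mul_setLIntegral (hF0 : ∀ y, 0 ≤ F y)
    (hF : AntitoneOn F (Ioi 0)) {σ : ℝ} (hσ : σ ≤ 1) (k : ℤ) :
    ENNReal.ofReal (F (2 ^ (k + 1)) * (2 ^ (k + 1)) ^ σ) ≤
      2 * ∫⁻ r in Ioc (2 ^ k) (2 ^ (k + 1)), ENNReal.ofReal (F r * r ^ (σ - 1)) := by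
  have h2k : (0 : ℝ) < 2 ^ k := zpow_pos two_pos k
  have h2k1 : (0 : ℝ) < 2 ^ (k + 1) := zpow_pos two_pos _
  set m := F (2 ^ (k + 1)) * (2 ^ (k + 1)) ^ (σ - 1) with hm_def
  have hm : ∀ r ∈ Ioc ((2 : ℝ) ^ k) (2 ^ (k + 1)), m ≤ F r * r ^ (σ - 1) := fun r hr =>
    mul_le_mul (hF (h2k.trans hr.1) h2k1 hr.2)
      (Real.rpow_le_rpow_of_nonpos (h2k.trans hr.1) hr.2 (by linarith))
      (Real.rpow_nonneg h2k1.le _) (hF0 r)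
  calc ENNReal.ofReal (F (2 ^ (k + 1)) * (2 ^ (k + 1)) ^ σ)
      = 2 * (ENNReal.ofReal m * volume (Ioc ((2 : ℝ) ^ k) (2 ^ (k + 1)))) := by
        have hm0 : 0 ≤ m := mul_nonneg (hF0 _) (Real.rpow_nonneg h2k1.le _)
        rw [Real.volume_Ioc, ← ENNReal.ofReal_mul hm0, ← ENNReal.ofReal_ofNat 2,
          ← ENNReal.ofReal_mul zero_le_two]
        have hlen : (2 : ℝ) ^ (k + 1) - 2 ^ k = 2 ^ (k + 1) / 2 := by
          rw [zpow_add_one₀ two_ne_zero]; ring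
        rw [hlen, hm_def, Real.rpow_sub_one h2k1.ne']
        field_simp
    _ = 2 * ∫⁻ r in Ioc ((2 : ℝ) ^ k) (2 ^ (k + 1)), ENNReal.ofReal m := by
        rw [setLIntegral_const]
    _ ≤ _ := by
        gcongr 2 * ?_
        exact setLIntegral_mono' measurableSet_Ioc fun r hr => ENNReal.ofReal_le_ofReal (hm r hr)

lemma tsum_ofReal_mul_zpow_rpow_le (hF0 : ∀ y, 0 ≤ F y) (hF : AntitoneOn F (Ioi 0))
    {σ : ℝ} (hσ : σ ≤ 1) :
    ∑' k : ℤ, ENNReal.ofReal (F (2 ^ k) * (2 ^ k) ^ σ) ≤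
      2 * ∫⁻ r in Ioi 0, ENNReal.ofReal (F r * r ^ (σ - 1)) := by
  calc ∑' k : ℤ, ENNReal.ofReal (F (2 ^ k) * (2 ^ k) ^ σ)
      = ∑' k : ℤ, ENNReal.ofReal (F (2 ^ (k + 1)) * (2 ^ (k + 1)) ^ σ) :=
        ((Equiv.addRight 1).tsum_eq fun k : ℤ => ENNReal.ofReal (F (2 ^ k) * (2 ^ k) ^ σ)).symm
    _ ≤ ∑' k : ℤ, 2 * ∫⁻ r in Ioc (2 ^ k) (2 ^ (k + 1)), ENNReal.ofReal (F r * r ^ (σ - 1)) :=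
        ENNReal.tsum_le_tsum (ofReal_mul_rpow_le_two_mul_setLIntegral hF0 hF hσ)
    _ = 2 * ∫⁻ r in ⋃ k : ℤ, Ioc (2 ^ k) (2 ^ (k + 1)), ENNReal.ofReal (F r * r ^ (σ - 1)) := by
        have hdisj : Pairwise (Disjoint on fun k : ℤ => Ioc ((2 : ℝ) ^ k) (2 ^ (k + 1))) := by
          simpa only [Order.succ_eq_add_one] using
            (zpow_right_mono₀ (one_le_two : (1 : ℝ) ≤ 2)).pairwise_disjoint_on_Ioc_succ
        rw [ENNReal.tsum_mul_left, lintegral_iUnion (fun _ => measurableSet_Ioc) hdisj]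
    _ ≤ 2 * ∫⁻ r in Ioi 0, ENNReal.ofReal (F r * r ^ (σ - 1)) := by
        gcongr
        exact iUnion_subset fun k r hr => (zpow_pos two_pos k).trans hr.1

end Dyadic

theorem lintegral_rearrLine_mul_rpow_le {F : ℝ → ℝ} (hF0 : ∀ y, 0 ≤ F y)
    (hF : AntitoneOn F (Ioi 0)) {α θ : ℝ} (hα : 0 < α) (hθ : 0 ≤ θ) (hαθ : α + θ ≤ 1) :
    ∫⁻ y in Ioi 0, ENNReal.ofReal (rearrLine (fun r => F r * r ^ θ) y * y ^ (α - 1)) ≤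
      ENNReal.ofReal (4 / α) * ∫⁻ r in Ioi 0, ENNReal.ofReal (F r * r ^ (α + θ - 1)) := by
  set φ : ℝ → ℝ := fun r => F r * r ^ θ
  have hφ : AEMeasurable φ (volume.restrict (Ioi 0)) :=
    (aemeasurable_restrict_of_antitoneOn measurableSet_Ioi hF).mul
      (measurable_id.pow_const θ).aemeasurable
  have hG := aemeasurable_restrict_of_antitoneOn (μ := volume) measurableSet_Ioi
    (antitoneOn_rearrangement hφ)
  have hdyadic (k : ℤ) :
      ENNReal.ofReal (2 ^ k) ^ α * ENNReal.ofReal (F (2 ^ k) * (2 ^ (k + 1)) ^ θ) ≤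
        2 * ENNReal.ofReal (F (2 ^ k) * (2 ^ k) ^ (α + θ)) := by
    have h2k : (0 : ℝ) < 2 ^ k := zpow_pos two_pos k
    have h2θ : (2 : ℝ) ^ θ ≤ 2 := by
      simpa using Real.rpow_le_rpow_of_exponent_le one_le_two (show θ ≤ 1 by linarith)
    rw [ENNReal.ofReal_rpow_of_nonneg h2k.le hα.le, ← ENNReal.ofReal_mul (by positivity),
      ← ENNReal.ofReal_ofNat 2, ← ENNReal.ofReal_mul zero_le_two]
    refine ENNReal.ofReal_le_ofReal ?_
    rw [zpow_add_one₀ two_ne_zero, Real.mul_rpow h2k.le zero_le_two, Real.rpow_add h2k]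
    have := hF0 (2 ^ k)
    calc _ = 2 ^ θ * (F (2 ^ k) * (((2 : ℝ) ^ k) ^ α * ((2 : ℝ) ^ k) ^ θ)) := by ring
      _ ≤ _ := mul_le_mul_of_nonneg_right h2θ (by positivity)
  rw [rearrLine_eq_rearrangement]
  calc _ ≤ (ENNReal.ofReal α)⁻¹ * ∫⁻ t in Ioi 0, volume.restrict (Ioi 0) {y | t < |φ y|} ^ α :=
        lintegral_mul_rpow_le_of_le_distribution hα (fun _ => rearrangement_nonneg _) hG
          fun y _ t ht => ofReal_le_measure_of_lt_rearrangement ht.le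
    _ ≤ (ENNReal.ofReal α)⁻¹ * ∑' k : ℤ,
          ENNReal.ofReal (2 ^ k) ^ α * ENNReal.ofReal (F (2 ^ k) * (2 ^ (k + 1)) ^ θ) := by
        gcongr
        exact lintegral_rpow_le_tsum_of_le_tsum_indicator hα (by linarith)
          fun t _ => volume_lt_abs_mul_rpow_le_tsum hF0 hF hθ t
    _ ≤ (ENNReal.ofReal α)⁻¹ *
          (2 * (2 * ∫⁻ r in Ioi 0, ENNReal.ofReal (F r * r ^ (α + θ - 1)))) := by
        gcongr
        calc _ ≤ ∑' k : ℤ, 2 * ENNReal.ofReal (F (2 ^ k) * (2 ^ k) ^ (α + θ)) :=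
              ENNReal.tsum_le_tsum hdyadic
          _ ≤ _ := by
            rw [ENNReal.tsum_mul_left]
            gcongr
            exact tsum_ofReal_mul_zpow_rpow_le hF0 hF hαθ
    _ = _ := by
        rw [← mul_assoc, ← mul_assoc, ← ENNReal.ofReal_inv_of_pos hα, ← ENNReal.ofReal_ofNat 2,
          ← ENNReal.ofReal_mul (by positivity), ← ENNReal.ofReal_mul (by positivity)]
        ring_nf

theorem statement9 (n : ℕ) (hn : 0 < n) :
    ∃ C : ℝ, 0 < C ∧ ∀ a s : ℝ, 0 < a → a < s → s < n →
      ∀ f : EuclideanSpace ℝ (Fin n) → ℝ, Measurable f →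
        (∫⁻ r in Ioi (0 : ℝ), ENNReal.ofReal (rearr f r * r ^ (s / n - 1))) < ⊤ →
        ∫⁻ y in Ioi (0 : ℝ),
            ENNReal.ofReal (rearrLine (fun r => rearr f r * r ^ ((s - a) / n)) y
              * y ^ (a / n - 1))
          ≤ ENNReal.ofReal (C / a) *
              ∫⁻ r in Ioi (0 : ℝ), ENNReal.ofReal (rearr f r * r ^ (s / n - 1)) := by
  have hn' : (0 : ℝ) < n := Nat.cast_pos.2 hn
  refine ⟨4 * n, by positivity, fun a s ha has hsn f hf _ => ?_⟩
  rw [rearr_eq_rearrangement]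
  have key := lintegral_rearrLine_mul_rpow_le (F := rearrangement volume f) rearrangement_nonneg
    (antitoneOn_rearrangement hf.aemeasurable)
    (div_pos ha hn') (div_nonneg (sub_nonneg.2 has.le) hn'.le)
    (by rw [← add_div, add_sub_cancel, div_le_one hn']; exact hsn.le)
  rw [← add_div, add_sub_cancel, div_div_eq_mul_div] at key
  exact key
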